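/- arXiv:1906.05089 — 2 statements merged into one kernel-verified Lean document; each statement's English description precedes it below -/
import Mathlib

section
/- For every integer n ≥ 2, the upper broadcast domination number of the path P_n equals n − 1, i.e. Γ_b(P_n) = n − 1 = diam(P_n). -/
open SimpleGraph

namespace Broadcast

variable {V : Type*} [Fintype V]

/-- The eccentricity of a vertex: the maximum distance from `v` to any vertex. -/
noncomputable def ecc (G : SimpleGraph V) (v : V) : ℕ :=
  Finset.univ.sup fun u => G.dist v u

/-- A broadcast on `G`: `f v ≤ e_G(v)` for every vertex `v`. -/
def IsBroadcast (G : SimpleGraph V) (f : V → ℕ) : Prop :=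
  ∀ v, f v ≤ ecc G v

/-- The cost of a broadcast. -/
def cost (f : V → ℕ) : ℕ := ∑ v, f v

/-- `hears G f u` is H_f(u): the set of f-broadcast vertices `v` with `d(u,v) ≤ f v`. -/
def hears (G : SimpleGraph V) (f : V → ℕ) (u : V) : Set V :=
  {v | 1 ≤ f v ∧ G.dist u v ≤ f v}

/-- A dominating broadcast: every vertex hears some broadcast vertex. -/
def IsDominating (G : SimpleGraph V) (f : V → ℕ) : Prop :=
  IsBroadcast G f ∧ ∀ u, (hears G f u).Nonempty

/-- A minimal dominating broadcast. -/
def IsMinimalDominating (G : SimpleGraph V) (f : V → ℕ) : Prop :=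
  IsDominating G f ∧ ∀ g, IsDominating G g → (∀ v, g v ≤ f v) → g = f

/-- The broadcast domination number γ_b: minimum cost of a dominating broadcast. -/
noncomputable def broadcastDomination (G : SimpleGraph V) : ℕ :=
  sInf {c | ∃ f, IsDominating G f ∧ cost f = c}

/-- The upper broadcast domination number Γ_b: maximum cost of a minimal dominating broadcast. -/
noncomputable def upperBroadcastDomination (G : SimpleGraph V) : ℕ :=
  sSup {c | ∃ f, IsMinimalDominating G f ∧ cost f = c}

/-- The private f-neighborhood PN_f(v): vertices hearing only `v`. -/
def privateNbhd (G : SimpleGraph V) (f : V → ℕ) (v : V) : Set V :=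
  {u | hears G f u = {v}}

open Classical in
/-- The private f-border PB_f(v). -/
noncomputable def privateBorder (G : SimpleGraph V) (f : V → ℕ) (v : V) : Set V :=
  if f v = 1 ∧ privateNbhd G f v = {v} then {v}
  else {u | u ∈ privateNbhd G f v ∧ G.dist u v = f v}

/-- An irredundant broadcast: every broadcast vertex has a nonempty private border. -/
def IsIrredundant (G : SimpleGraph V) (f : V → ℕ) : Prop :=
  IsBroadcast G f ∧ ∀ v, 1 ≤ f v → (privateBorder G f v).Nonempty

/-- A maximal irredundant broadcast. -/
def IsMaximalIrredundant (G : SimpleGraph V) (f : V → ℕ) : Prop :=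
  IsIrredundant G f ∧ ∀ g, IsIrredundant G g → (∀ v, f v ≤ g v) → g = f

/-- The upper broadcast irredundance number IR_b: maximum cost of an irredundant broadcast. -/
noncomputable def upperBroadcastIrredundance (G : SimpleGraph V) : ℕ :=
  sSup {c | ∃ f, IsIrredundant G f ∧ cost f = c}

/-- The broadcast irredundance number ir_b: minimum cost of a maximal irredundant broadcast. -/
noncomputable def broadcastIrredundance (G : SimpleGraph V) : ℕ :=
  sInf {c | ∃ f, IsMaximalIrredundant G f ∧ cost f = c}

/-- An independent broadcast: every broadcast vertex hears only itself, i.e. |H_f(v)| = 1. -/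
def IsIndependent (G : SimpleGraph V) (f : V → ℕ) : Prop :=
  IsBroadcast G f ∧ ∀ v, 1 ≤ f v → hears G f v = {v}

/-- A maximal independent broadcast. -/
def IsMaximalIndependent (G : SimpleGraph V) (f : V → ℕ) : Prop :=
  IsIndependent G f ∧ ∀ g, IsIndependent G g → (∀ v, f v ≤ g v) → g = f

/-- The broadcast independence number β_b: maximum cost of an independent broadcast. -/
noncomputable def broadcastIndependence (G : SimpleGraph V) : ℕ :=
  sSup {c | ∃ f, IsIndependent G f ∧ cost f = c}

/-- The lower broadcast independence number i_b: minimum cost of a maximal independent broadcast. -/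
noncomputable def lowerBroadcastIndependence (G : SimpleGraph V) : ℕ :=
  sInf {c | ∃ f, IsMaximalIndependent G f ∧ cost f = c}

/-- A packing broadcast: every vertex hears at most one broadcast vertex. -/
def IsPacking (G : SimpleGraph V) (f : V → ℕ) : Prop :=
  IsBroadcast G f ∧ ∀ u, (hears G f u).Subsingleton

/-- A maximal packing broadcast. -/
def IsMaximalPacking (G : SimpleGraph V) (f : V → ℕ) : Prop :=
  IsPacking G f ∧ ∀ g, IsPacking G g → (∀ v, f v ≤ g v) → g = f

/-- The broadcast packing number P_b: maximum cost of a packing broadcast. -/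
noncomputable def broadcastPacking (G : SimpleGraph V) : ℕ :=
  sSup {c | ∃ f, IsPacking G f ∧ cost f = c}

/-- The lower broadcast packing number p_b: minimum cost of a maximal packing broadcast. -/
noncomputable def lowerBroadcastPacking (G : SimpleGraph V) : ℕ :=
  sInf {c | ∃ f, IsMaximalPacking G f ∧ cost f = c}

end Broadcast

/-!
Broadcasting with strength `n - 1` from an end vertex of `P_n` is a minimal dominating broadcast.
Conversely, if `f` is minimal dominating and `f v ≠ 0`, lowering `f v` by one leaves some vertex
`p` undominated: `p` hears only `v`, at distance exactly `f v` unless `f v = 1`. The `f v` edges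
between `v` and `p` (an edge at `v` when `p = v`) are disjoint for distinct broadcast vertices,
since `p` is out of reach of every other broadcast vertex; so `f` costs at most the `n - 1` edges.
-/

open SimpleGraph Finset

theorem Nat.sum_dist_le_of_pairwiseDisjoint {ι : Type*} {s : Finset ι} {a b : ι → ℕ} {m : ℕ}
    (ha : ∀ i ∈ s, a i ≤ m) (hb : ∀ i ∈ s, b i ≤ m)
    (hs : (s : Set ι).PairwiseDisjoint fun i => Ico (min (a i) (b i)) (max (a i) (b i))) :
    ∑ i ∈ s, Nat.dist (a i) (b i) ≤ m := by
  classical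
  calc ∑ i ∈ s, Nat.dist (a i) (b i)
      = ∑ i ∈ s, #(Ico (min (a i) (b i)) (max (a i) (b i))) :=
        sum_congr rfl fun i _ => by rw [Nat.card_Ico, Nat.dist]; omega
    _ = #(s.biUnion fun i => Ico (min (a i) (b i)) (max (a i) (b i))) := (card_biUnion hs).symm
    _ ≤ #(range m) := card_le_card <| biUnion_subset.2 fun i hi x hx => by
        simp only [mem_Ico, mem_range] at hx ⊢
        have := ha i hi; have := hb i hi; omega
    _ = m := card_range m

theorem Nat.disjoint_Ico_of_lt_dist {v w p q a b : ℕ}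
    (ha : a = p ∨ (p = v ∧ Nat.dist a v = 1)) (hb : b = q ∨ (q = w ∧ Nat.dist b w = 1))
    (hp : Nat.dist b w < Nat.dist p w) (hq : Nat.dist a v < Nat.dist q v) :
    Disjoint (Ico (min a v) (max a v)) (Ico (min b w) (max b w)) := by
  rw [Finset.disjoint_left]
  intro e hea heb
  simp only [mem_Ico, Nat.dist] at *
  omega

namespace SimpleGraph

theorem Walk.dist_le_length_pathGraph {n : ℕ} {i j : Fin n} (w : (pathGraph n).Walk i j) :
    Nat.dist i j ≤ w.length := by
  induction w with
  | nil => simp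
  | cons h _ ih =>
    rw [pathGraph_adj] at h
    simp only [Walk.length_cons, Nat.dist] at ih ⊢
    omega

theorem pathGraph_dist_le {n : ℕ} (i : Fin n) :
    ∀ (k : ℕ) (j : Fin n), (i : ℕ) + k = j → (pathGraph n).dist i j ≤ k
  | 0, j, h => by
    obtain rfl : i = j := Fin.ext (by omega)
    simp
  | k + 1, j, h => by
    have hj : (i : ℕ) + k < n := by omega
    have hadj : (pathGraph n).Adj ⟨i + k, hj⟩ j := pathGraph_adj.2 (.inl (by simp only; omega))
    calc (pathGraph n).dist i j
        ≤ (pathGraph n).dist i ⟨i + k, hj⟩ + (pathGraph n).dist ⟨i + k, hj⟩ j :=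
          (pathGraph_preconnected n _ _).dist_triangle_right i
      _ ≤ k + 1 := by rw [dist_eq_one_iff_adj.2 hadj]; grw [pathGraph_dist_le i k _ rfl]

theorem pathGraph_dist {n : ℕ} (i j : Fin n) : (pathGraph n).dist i j = Nat.dist i j := by
  obtain ⟨w, hw⟩ := (pathGraph_preconnected n i j).exists_walk_length_eq_dist
  refine le_antisymm ?_ (hw ▸ w.dist_le_length_pathGraph)
  rcases le_total (i : ℕ) j with h | h
  · exact (pathGraph_dist_le i (j - i) j (by omega)).trans (by unfold Nat.dist; omega)
  · rw [dist_comm]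
    exact (pathGraph_dist_le j (i - j) i (by omega)).trans (by unfold Nat.dist; omega)

end SimpleGraph

namespace Broadcast

section General

variable {V : Type*} [Fintype V] {G : SimpleGraph V} {f : V → ℕ}

theorem exists_dist_eq_ecc (G : SimpleGraph V) (v : V) : ∃ u, G.dist v u = ecc G v := by
  obtain ⟨u, -, hu⟩ := exists_mem_eq_sup univ ⟨v, mem_univ v⟩ fun u => G.dist v u
  exact ⟨u, hu.symm⟩

theorem dist_le_ecc (G : SimpleGraph V) (v u : V) : G.dist v u ≤ ecc G v :=
  le_sup (f := fun u => G.dist v u) (mem_univ u)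

theorem IsMinimalDominating.exists_private_vertex (hf : IsMinimalDominating G f) {v : V}
    (hv : f v ≠ 0) : ∃ u, hears G f u = {v} ∧ (G.dist u v = f v ∨ f v = 1) := by
  classical
  set g := Function.update f v (f v - 1)
  have hgf : ∀ w, g w ≤ f w := fun w => by
    rcases eq_or_ne w v with rfl | h <;> simp [g, *]
  have hg : ¬IsDominating G g := fun hg => by
    have := congrFun (hf.2 g hg hgf) v
    simp only [Function.update_self, g] at this
    omega
  obtain ⟨u, hu⟩ : ∃ u, hears G g u = ∅ := by
    simpa [IsDominating, Set.not_nonempty_iff_eq_empty,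
      show IsBroadcast G g from fun w => (hgf w).trans (hf.1.1 w)] using hg
  have hother : ∀ w ≠ v, w ∉ hears G f u := fun w hw h => by
    have : w ∈ hears G g u := by simpa [hears, g, hw] using h
    simp [hu] at this
  obtain ⟨w, hw⟩ := hf.1.2 u
  obtain rfl : w = v := by_contra fun h => hother w h hw
  refine ⟨u, Set.eq_singleton_iff_unique_mem.2 ⟨hw, fun x hx => by_contra (hother x · hx)⟩, ?_⟩
  have : w ∉ hears G g u := by simp [hu]
  simp only [hears, Set.mem_ofPred_eq, Function.update_self, not_and, not_le, g] at this hw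
  omega

theorem isMinimalDominating_single_ecc [DecidableEq V] {v : V} (hv : ecc G v ≠ 0) :
    IsMinimalDominating G (Pi.single v (ecc G v)) := by
  have hdom : IsDominating G (Pi.single v (ecc G v)) := by
    refine ⟨fun w => ?_, fun u => ⟨v, ?_⟩⟩
    · rcases eq_or_ne w v with rfl | h <;> simp [*]
    · simpa [hears, dist_comm, Nat.one_le_iff_ne_zero, hv] using dist_le_ecc G v u
  refine ⟨hdom, fun g hg hgf => ?_⟩
  have hg0 : ∀ w ≠ v, g w = 0 := fun w h => by simpa [h] using hgf w
  obtain ⟨x, hx⟩ := exists_dist_eq_ecc G v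
  obtain ⟨w, hw1, hw2⟩ := hg.2 x
  obtain rfl : w = v := by_contra fun h => by simp [hg0 w h] at hw1
  funext u
  rcases eq_or_ne u w with rfl | h
  · have := hgf u
    rw [dist_comm, hx] at hw2
    simp only [Pi.single_eq_same] at this ⊢
    omega
  · simp [hg0 u h, h]

end General

section Path

variable {n : ℕ} {f : Fin n → ℕ}

theorem ecc_pathGraph_zero (m : ℕ) : ecc (pathGraph (m + 1)) 0 = m := by
  refine le_antisymm (Finset.sup_le fun u _ => ?_) ?_
  · rw [pathGraph_dist]; unfold Nat.dist; omega
  · simpa [pathGraph_dist, Nat.dist] using dist_le_ecc (pathGraph (m + 1)) 0 (Fin.last m)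

/-- The segment from `v` to its private vertex `p`, or to a neighbour of `v` when `p = v`. -/
theorem IsMinimalDominating.exists_segment_pathGraph (hf : IsMinimalDominating (pathGraph n) f)
    {v : Fin n} (hv : f v ≠ 0) :
    ∃ (p : Fin n) (a : ℕ), a < n ∧ Nat.dist a v = f v ∧
      (a = p ∨ ((p : ℕ) = v ∧ Nat.dist a v = 1)) ∧ ∀ w, f w ≠ 0 → w ≠ v → f w < Nat.dist p w := by
  obtain ⟨p, hp, hdist⟩ := hf.exists_private_vertex hv
  have hfar : ∀ w, f w ≠ 0 → w ≠ v → f w < Nat.dist p w := fun w hw hwv => by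
    have : w ∉ hears (pathGraph n) f p := by rw [hp]; exact hwv
    simp only [hears, Set.mem_ofPred_eq, pathGraph_dist, not_and, not_le] at this
    exact this (Nat.one_le_iff_ne_zero.2 hw)
  rw [pathGraph_dist] at hdist
  by_cases h : Nat.dist p v = f v
  · exact ⟨p, p, p.2, h, .inl rfl, hfar⟩
  have hfv : f v = 1 := hdist.resolve_left h
  have hpv : (p : ℕ) = v := by
    have hv_mem : v ∈ hears (pathGraph n) f p := by rw [hp]; rfl
    have := hv_mem.2
    rw [pathGraph_dist] at this
    unfold Nat.dist at *
    omega
  obtain ⟨x, hx⟩ := exists_dist_eq_ecc (pathGraph n) v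
  have hvx : 1 ≤ Nat.dist v x := by rw [← pathGraph_dist, hx, ← hfv]; exact hf.1.1 v
  have := x.2
  refine ⟨p, if (v : ℕ) + 1 < n then v + 1 else v - 1, ?_, ?_, .inr ⟨hpv, ?_⟩, hfar⟩ <;>
    split_ifs <;> unfold Nat.dist at * <;> omega

-- The edge `{e, e + 1}` of `P_n` is indexed by `e`, so `Ico (min a v) (max a v)` is the set of
-- edges between `a` and `v`.
theorem IsMinimalDominating.cost_le_pathGraph (hf : IsMinimalDominating (pathGraph n) f) :
    cost f ≤ n - 1 := by
  classical
  choose! p a ha_lt ha_dist ha_end hp_far using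
    fun v (hv : f v ≠ 0) => hf.exists_segment_pathGraph hv
  have hmem : ∀ {v}, v ∈ univ.filter (f · ≠ 0) → f v ≠ 0 := fun hv => (mem_filter.1 hv).2
  calc cost f = ∑ v ∈ univ.filter (f · ≠ 0), f v := (sum_filter_ne_zero _).symm
    _ = ∑ v ∈ univ.filter (f · ≠ 0), Nat.dist (a v) v :=
        sum_congr rfl fun v hv => (ha_dist v (hmem hv)).symm
    _ ≤ n - 1 := by
      refine Nat.sum_dist_le_of_pairwiseDisjoint (fun v hv => ?_) (fun v _ => by omega)
        fun v hv w hw hvw => Nat.disjoint_Ico_of_lt_dist (ha_end v (hmem hv)) (ha_end w (hmem hw))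
          ?_ ?_
      · have := ha_lt v (hmem hv); omega
      · exact (ha_dist w (hmem hw)).trans_lt (hp_far v (hmem hv) w (hmem hw) (Ne.symm hvw))
      · exact (ha_dist v (hmem hv)).trans_lt (hp_far w (hmem hw) v (hmem hv) hvw)

end Path

end Broadcast

open Broadcast in
/-- For every integer n ≥ 2, Γ_b(P_n) = n − 1 = diam(P_n). -/
theorem upperBroadcastDomination_pathGraph (n : ℕ) (hn : 2 ≤ n) :
    upperBroadcastDomination (SimpleGraph.pathGraph n) = n - 1 := by
  obtain ⟨m, rfl⟩ : ∃ m, n = m + 1 := ⟨n - 1, by omega⟩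
  have hecc : ecc (pathGraph (m + 1)) 0 = m := ecc_pathGraph_zero m
  refine IsGreatest.csSup_eq ⟨⟨_, isMinimalDominating_single_ecc (v := 0) (by omega), ?_⟩, ?_⟩
  · simp [cost, hecc]
  · rintro c ⟨f, hf, rfl⟩
    exact hf.cost_le_pathGraph
end

section
/- For every integer n ≥ 3, the broadcast domination numbers of the cycle C_n and of the path P_n coincide and equal ⌈n/3⌉, i.e. γ_b(C_n) = γ_b(P_n) = ⌈n/3⌉. -/
open SimpleGraph

/-!
A broadcast vertex `v` dominates only the vertices at distance at most `f v` from it, and in a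
path or a cycle there are at most `2 f v + 1 ≤ 3 f v` of those, so a dominating broadcast costs at
least `n / 3`. Conversely, broadcasting with strength one from the vertices `x_i` with
`i ≡ 1 (mod 3)`, and from the last vertex if it is left undominated, dominates `P_n`, hence also
its supergraph `C_n`, at cost `⌈n / 3⌉`.
-/

namespace Broadcast

open Finset

variable {V : Type*} [Fintype V] {G : SimpleGraph V}

noncomputable def closedBall (G : SimpleGraph V) (v : V) (r : ℕ) : Finset V :=
  {u | G.dist u v ≤ r}

lemma closedBall_subset_of_le {G' : SimpleGraph V} (hle : G ≤ G') (hG : G.Preconnected)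
    (v : V) (r : ℕ) : closedBall G v r ⊆ closedBall G' v r := by
  intro u hu
  simp only [closedBall, mem_filter, mem_univ, true_and] at hu ⊢
  exact ((hG u v).dist_anti hle).trans hu

lemma one_le_ecc_of_adj {v w : V} (h : G.Adj v w) : 1 ≤ ecc G v :=
  (dist_eq_one_iff_adj.mpr h).symm.le.trans (le_sup (mem_univ w))

lemma broadcastDomination_le_cost {f : V → ℕ} (hf : IsDominating G f) :
    broadcastDomination G ≤ cost f :=
  Nat.sInf_le ⟨f, hf, rfl⟩

lemma exists_isDominating_cost_eq {f : V → ℕ} (hf : IsDominating G f) :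
    ∃ g, IsDominating G g ∧ cost g = broadcastDomination G :=
  Nat.sInf_mem (s := {c | ∃ f, IsDominating G f ∧ cost f = c}) ⟨_, f, hf, rfl⟩

lemma isDominating_indicator [DecidableEq V] {S : Finset V} (hG : ∀ v, ∃ w, G.Adj v w)
    (hS : ∀ u, ∃ v ∈ S, G.dist u v ≤ 1) :
    IsDominating G (fun v => if v ∈ S then 1 else 0) := by
  refine ⟨fun v => ?_, fun u => ?_⟩
  · obtain ⟨w, hvw⟩ := hG v
    have := one_le_ecc_of_adj hvw
    dsimp only
    split_ifs <;> omega
  · obtain ⟨v, hvS, hdist⟩ := hS u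
    exact ⟨v, by simp [hears, hvS, hdist]⟩

lemma cost_indicator [DecidableEq V] (S : Finset V) :
    cost (fun v => if v ∈ S then 1 else 0) = #S := by
  simp [cost]

lemma card_le_three_mul_cost {f : V → ℕ}
    (hball : ∀ v r, 1 ≤ r → #(closedBall G v r) ≤ 3 * r) (hf : ∀ u, (hears G f u).Nonempty) :
    Fintype.card V ≤ 3 * cost f := by
  classical
  have hcover : (univ : Finset V) ⊆
      ({v | 1 ≤ f v} : Finset V).biUnion fun v => closedBall G v (f v) := by
    intro u _
    obtain ⟨v, hv, hdist⟩ := hf u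
    simp only [mem_biUnion, mem_filter, mem_univ, true_and, closedBall]
    exact ⟨v, hv, hdist⟩
  calc Fintype.card V ≤ ∑ v with 1 ≤ f v, #(closedBall G v (f v)) :=
        (card_le_card hcover).trans card_biUnion_le
    _ ≤ ∑ v with 1 ≤ f v, 3 * f v :=
        sum_le_sum fun v hv => hball v (f v) (mem_filter.mp hv).2
    _ ≤ 3 * cost f := by
        rw [← mul_sum]
        exact Nat.mul_le_mul_left 3 (sum_le_sum_of_subset (filter_subset _ _))

def pathDominatingSet (n : ℕ) : Finset (Fin n) :=
  {v | v.val % 3 = 1 ∨ (v.val + 1 = n ∧ v.val % 3 = 0)}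

-- Each block `{3k, 3k+1, 3k+2}` contains at most one vertex of the set.
lemma card_pathDominatingSet_le (n : ℕ) : #(pathDominatingSet n) ≤ (n + 2) / 3 := by
  refine (card_le_card_of_injOn (fun v => v.val / 3) (fun v _ => ?_) fun v hv w hw hvw => ?_).trans
    (card_range _).le
  · simp only [coe_range, Set.mem_Iio]
    omega
  · simp only [pathDominatingSet, coe_filter, mem_univ, true_and, Set.mem_ofPred_eq] at hv hw hvw
    exact Fin.ext (by omega)

lemma exists_mem_pathDominatingSet {n : ℕ} (u : Fin n) :
    ∃ v ∈ pathDominatingSet n, u = v ∨ (pathGraph n).Adj u v := by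
  simp only [pathDominatingSet, mem_filter, mem_univ, true_and, pathGraph_adj]
  obtain h | h | h : u.val % 3 = 1 ∨ u.val % 3 = 0 ∨ u.val % 3 = 2 := by omega
  · exact ⟨u, by omega, .inl rfl⟩
  · by_cases hlast : u.val + 1 = n
    · exact ⟨u, by omega, .inl rfl⟩
    · exact ⟨⟨u.val + 1, by omega⟩, by dsimp only; omega, .inr (.inl rfl)⟩
  · exact ⟨⟨u.val - 1, by omega⟩, by dsimp only; omega, .inr (.inr (by dsimp only; omega))⟩

lemma pathGraph_exists_adj {n : ℕ} (hn : 2 ≤ n) (v : Fin n) : ∃ w, (pathGraph n).Adj v w := by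
  simp only [pathGraph_adj]
  by_cases hv : v.val = 0
  · exact ⟨⟨1, by omega⟩, .inl (by simp [hv])⟩
  · exact ⟨⟨v.val - 1, by omega⟩, .inr (by dsimp only; omega)⟩

open Fin.CommRing in
lemma exists_int_of_cycleGraph_walk {n : ℕ} [NeZero n] {u v : Fin n}
    (p : (cycleGraph n).Walk u v) : ∃ k : ℤ, k.natAbs ≤ p.length ∧ u = v + k := by
  induction p with
  | nil => exact ⟨0, by simp⟩
  | @cons a b c hab p ih =>
    obtain ⟨k, hk, hb⟩ := ih
    rw [Walk.length_cons]
    rcases cycleGraph_adj'.mp hab with h | h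
    · refine ⟨k + 1, by omega, ?_⟩
      rw [← sub_add_cancel a b, ← Fin.cast_val_eq_self (a - b), h, hb]
      push_cast
      ring
    · refine ⟨k - 1, by omega, ?_⟩
      rw [← sub_sub_cancel b a, ← Fin.cast_val_eq_self (b - a), h, hb]
      push_cast
      ring

open Fin.CommRing in
lemma card_closedBall_cycleGraph_le {n : ℕ} [NeZero n] (v : Fin n) (r : ℕ) :
    #(closedBall (cycleGraph n) v r) ≤ 2 * r + 1 := by
  have hsub : closedBall (cycleGraph n) v r ⊆
      (Icc (-r : ℤ) r).image fun k : ℤ => v + (k : Fin n) := by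
    intro u hu
    simp only [closedBall, mem_filter, mem_univ, true_and] at hu
    obtain ⟨p, hp⟩ := (cycleGraph_preconnected u v).exists_walk_length_eq_dist
    obtain ⟨k, hk, rfl⟩ := exists_int_of_cycleGraph_walk p
    exact mem_image.mpr ⟨k, mem_Icc.mpr (by omega), rfl⟩
  calc #(closedBall (cycleGraph n) v r) ≤ #(Icc (-r : ℤ) r) :=
        (card_le_card hsub).trans card_image_le
    _ = 2 * r + 1 := by rw [Int.card_Icc]; omega

lemma card_closedBall_pathGraph_le {n : ℕ} (v : Fin n) (r : ℕ) :
    #(closedBall (pathGraph n) v r) ≤ 2 * r + 1 := by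
  have : NeZero n := ⟨v.pos.ne'⟩
  exact (card_le_card (closedBall_subset_of_le pathGraph_le_cycleGraph
    (pathGraph_preconnected n) v r)).trans (card_closedBall_cycleGraph_le v r)

lemma broadcastDomination_eq_of_pathGraph_le {n : ℕ} (hn : 2 ≤ n) {G : SimpleGraph (Fin n)}
    (hpath : pathGraph n ≤ G) (hball : ∀ v r, 1 ≤ r → #(closedBall G v r) ≤ 3 * r) :
    broadcastDomination G = (n + 2) / 3 := by
  have hS : ∀ u, ∃ v ∈ pathDominatingSet n, G.dist u v ≤ 1 := fun u => by
    obtain ⟨v, hv, rfl | hadj⟩ := exists_mem_pathDominatingSet u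
    · exact ⟨u, hv, by simp⟩
    · exact ⟨v, hv, (dist_eq_one_iff_adj.mpr (hpath hadj)).le⟩
  have hG : ∀ v, ∃ w, G.Adj v w := fun v =>
    (pathGraph_exists_adj hn v).imp fun _ hadj => hpath hadj
  have hdom := isDominating_indicator hG hS
  obtain ⟨g, hg, hcost⟩ := exists_isDominating_cost_eq hdom
  have hlower := card_le_three_mul_cost hball hg.2
  rw [Fintype.card_fin] at hlower
  have hupper := (broadcastDomination_le_cost hdom).trans_eq (cost_indicator _)
  have := card_pathDominatingSet_le n
  omega

end Broadcast

open Broadcast in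
/-- For every integer n ≥ 3, γ_b(C_n) = γ_b(P_n) = ⌈n/3⌉. -/
theorem broadcastDomination_cycleGraph_eq_pathGraph (n : ℕ) (hn : 3 ≤ n) :
    broadcastDomination (SimpleGraph.cycleGraph n) =
      broadcastDomination (SimpleGraph.pathGraph n) ∧
    broadcastDomination (SimpleGraph.pathGraph n) = (n + 2) / 3 := by
  have : NeZero n := ⟨by omega⟩
  have hC := broadcastDomination_eq_of_pathGraph_le (n := n) (by omega) pathGraph_le_cycleGraph
    fun v r hr => (card_closedBall_cycleGraph_le v r).trans (by omega)
  have hP := broadcastDomination_eq_of_pathGraph_le (n := n) (by omega) le_rfl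
    fun v r hr => (card_closedBall_pathGraph_le v r).trans (by omega)
  exact ⟨hC.trans hP.symm, hP⟩
end
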